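/- Let F be a finite field with q elements and let U ⊆ F³ with |U| = q²; assume U is not contained in any affine plane of F³. Let S₁ ≠ S₂ be two 2-dimensional F-linear subspaces of F³ whose corresponding lines at infinity are both undetermined by U, and let M = S₁ ∩ S₂ (a 1-dimensional subspace). If there exist two affine lines contained in U with directions contained in S₁ that are not parallel, then any two distinct affine lines contained in U with directions contained in S₁ have distinct directions, and no affine line contained in U with direction contained in S₁ has direction M. -/

import Mathlib

open Pointwise

/-- The subspace at infinity corresponding to the linear subspace `S ≤ V` is *determined*
by the affine point set `U ⊆ V` if for some `x` the coset `x + S` is affinely spanned by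
`U ∩ (x + S)`, i.e. the coset is contained in the affine span of `U ∩ (x + S)`. -/
def IsDeterminedBy {F V : Type*} [Field F] [AddCommGroup V] [Module F V]
    (U : Set V) (S : Submodule F V) : Prop :=
  ∃ x : V, x +ᵥ (S : Set V) ⊆ (affineSpan F (U ∩ (x +ᵥ (S : Set V))) : Set V)

/-!
If the line at infinity of a plane `S` is undetermined, every coset `x + S` meets `U` in a
collinear set. A line of `U` with direction `S₁ ∩ S₂` therefore fills its `S₂`-fiber, so any
other line of `U` with direction in `S₁` crosses it, and the collinear `S₁`-fiber through the
crossing point would contain two lines of different directions. Two distinct parallel lines of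
`U` with direction in `S₁` are thus transversal to `S₂`; every collinear `S₂`-fiber meets both,
so it lies in the plane they span, and then so does all of `U`.
-/

open Module Set Submodule

section

variable {F V : Type*} [Field F] [AddCommGroup V] [Module F V]

theorem mem_vadd_coe_iff {S : Submodule F V} {x y : V} :
    y ∈ x +ᵥ (S : Set V) ↔ y - x ∈ S := by
  rw [mem_leftAddCoset_iff, neg_add_eq_sub]; rfl

theorem self_mem_vadd_coe (S : Submodule F V) (x : V) : x ∈ x +ᵥ (S : Set V) :=
  mem_vadd_coe_iff.2 (by simp)

theorem mem_vadd_coe_comm {S : Submodule F V} {x y : V} :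
    y ∈ x +ᵥ (S : Set V) ↔ x ∈ y +ᵥ (S : Set V) := by
  rw [mem_vadd_coe_iff, mem_vadd_coe_iff, ← S.neg_mem_iff, neg_sub]

theorem vadd_coe_subset_vadd_coe {D S : Submodule F V} (hDS : D ≤ S) {p x : V}
    (hp : p ∈ x +ᵥ (S : Set V)) : p +ᵥ (D : Set V) ⊆ x +ᵥ (S : Set V) := by
  intro y hy
  rw [mem_vadd_coe_iff] at hp hy ⊢
  simpa using S.add_mem (hDS hy) hp

theorem sup_eq_top_of_not_le [FiniteDimensional F V] {D S : Submodule F V}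
    (hS : finrank F V = finrank F S + 1) (hDS : ¬ D ≤ S) : D ⊔ S = ⊤ := by
  obtain ⟨d, hdD, hdS⟩ := SetLike.not_le_iff_exists.1 hDS
  have htop : S ⊔ span F {d} = ⊤ :=
    eq_top_of_finrank_eq (by rw [finrank_sup_span_singleton hdS, hS])
  rw [eq_top_iff, ← htop]
  exact sup_le le_sup_right (((span_singleton_le_iff_mem d D).2 hdD).trans le_sup_left)

theorem exists_mem_vadd_coe_inter {D S : Submodule F V} (h : D ⊔ S = ⊤) (p x : V) :
    ∃ z, z ∈ p +ᵥ (D : Set V) ∧ z ∈ x +ᵥ (S : Set V) := by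
  obtain ⟨d, hd, s, hs, hds⟩ := mem_sup.1 (h ▸ mem_top : x - p ∈ D ⊔ S)
  refine ⟨p + d, mem_vadd_coe_iff.2 (by simpa), mem_vadd_coe_iff.2 ?_⟩
  rw [show p + d - x = -s by rw [eq_sub_of_add_eq' hds]; abel]
  exact S.neg_mem hs

theorem finrank_inf_lt_of_ne [FiniteDimensional F V] {S₁ S₂ : Submodule F V} (hne : S₁ ≠ S₂)
    (h : finrank F S₁ = finrank F S₂) : finrank F ↥(S₁ ⊓ S₂) < finrank F S₁ := by
  refine finrank_lt_finrank_of_lt (lt_of_le_of_ne inf_le_left fun heq => hne ?_)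
  exact eq_of_le_of_finrank_eq (inf_eq_left.1 heq) h

theorem le_of_finrank_le_one_of_mem [FiniteDimensional F V] {E T : Submodule F V}
    (hE : finrank F E ≤ 1) {v : V} (hvE : v ∈ E) (hv : v ≠ 0) (hvT : v ∈ T) : E ≤ T := by
  have hvE' : span F {v} = E := eq_of_le_of_finrank_le ((span_singleton_le_iff_mem v E).2 hvE)
    (by rw [finrank_span_singleton hv]; exact hE)
  exact hvE' ▸ (span_singleton_le_iff_mem v T).2 hvT

theorem not_le_of_ne_inf [FiniteDimensional F V] {S₁ S₂ D : Submodule F V} (hne : S₁ ≠ S₂)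
    (hS₁ : finrank F S₁ = 2) (hS₂ : finrank F S₂ = 2) (hD : finrank F D = 1) (hDS₁ : D ≤ S₁)
    (hDM : D ≠ S₁ ⊓ S₂) : ¬ D ≤ S₂ := fun hDS₂ => by
  have := finrank_inf_lt_of_ne hne (hS₁.trans hS₂.symm)
  exact hDM (eq_of_le_of_finrank_le (le_inf hDS₁ hDS₂) (by omega))

theorem vectorSpan_eq_of_vadd_coe_subset [FiniteDimensional F V] {A : Set V}
    (hA : Collinear F A) {D : Submodule F V} (hD : finrank F D = 1) {p : V}
    (hpA : p +ᵥ (D : Set V) ⊆ A) : vectorSpan F A = D := by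
  have hle : D ≤ vectorSpan F A := fun d hd => by
    simpa using vsub_mem_vectorSpan F (hpA (mem_vadd_coe_iff.2 (by simpa : p + d - p ∈ D)))
      (hpA (self_mem_vadd_coe D p))
  exact (eq_of_le_of_finrank_le hle (hD ▸ hA.finrank_le_one)).symm

variable [FiniteDimensional F V] {U : Set V}

theorem collinear_inter_vadd_coe {S : Submodule F V} (hS : finrank F S = 2)
    (hnd : ¬ IsDeterminedBy U S) (x : V) : Collinear F (U ∩ (x +ᵥ (S : Set V))) := by
  set A := U ∩ (x +ᵥ (S : Set V))
  obtain hA | ⟨a, ha⟩ := A.eq_empty_or_nonempty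
  · rw [hA]; exact collinear_empty F V
  have hle : vectorSpan F A ≤ S := by
    refine span_le.2 ?_
    rintro _ ⟨b, hb, c, hc, rfl⟩
    simpa using S.sub_mem (mem_vadd_coe_iff.1 hb.2) (mem_vadd_coe_iff.1 hc.2)
  rw [collinear_iff_finrank_le_one]
  by_contra hlt
  have hAS : vectorSpan F A = S := eq_of_le_of_finrank_le hle (by omega)
  refine hnd ⟨x, fun y hy => ?_⟩
  have hya : y - a ∈ (affineSpan F A).direction := by
    rw [direction_affineSpan, hAS]
    simpa using S.sub_mem (mem_vadd_coe_iff.1 hy) (mem_vadd_coe_iff.1 ha.2)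
  simpa using AffineSubspace.vadd_mem_of_mem_direction hya (subset_affineSpan F A ha)

theorem ne_inf_of_vadd_coe_subset (hV : finrank F V = 3) {S₁ S₂ : Submodule F V}
    (hne : S₁ ≠ S₂) (hS₁ : finrank F S₁ = 2) (hS₂ : finrank F S₂ = 2)
    (hnd₁ : ¬ IsDeterminedBy U S₁) (hnd₂ : ¬ IsDeterminedBy U S₂)
    {p' : V} {D' : Submodule F V} (hD' : finrank F D' = 1) (hD'S₁ : D' ≤ S₁)
    (hD'M : D' ≠ S₁ ⊓ S₂) (hl' : p' +ᵥ (D' : Set V) ⊆ U)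
    {p : V} {D : Submodule F V} (hD : finrank F D = 1) (hl : p +ᵥ (D : Set V) ⊆ U) :
    D ≠ S₁ ⊓ S₂ := by
  intro hDM
  have hDS₁ : D ≤ S₁ := hDM ▸ inf_le_left
  have hDS₂ : D ≤ S₂ := hDM ▸ inf_le_right
  have hD'S₂ := not_le_of_ne_inf hne hS₁ hS₂ hD' hD'S₁ hD'M
  obtain ⟨z, hz', hz⟩ := exists_mem_vadd_coe_inter (sup_eq_top_of_not_le (by omega) hD'S₂) p' p
  -- The line `p + D` fills its `S₂`-fiber, so it passes through `z`.
  have hA₂ := vectorSpan_eq_of_vadd_coe_subset (collinear_inter_vadd_coe hS₂ hnd₂ p) hD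
    (subset_inter hl (vadd_coe_subset_vadd_coe hDS₂ (self_mem_vadd_coe S₂ p)))
  have hzD : z ∈ p +ᵥ (D : Set V) := mem_vadd_coe_iff.2 <| hA₂ ▸
    vsub_mem_vectorSpan F ⟨hl' hz', hz⟩ ⟨hl (self_mem_vadd_coe D p), self_mem_vadd_coe S₂ p⟩
  -- Both lines now lie in the collinear `S₁`-fiber through `z`.
  have hA₁ := collinear_inter_vadd_coe hS₁ hnd₁ z
  have hp : p ∈ z +ᵥ (S₁ : Set V) :=
    mem_vadd_coe_comm.1 (vadd_coe_subset_vadd_coe hDS₁ (self_mem_vadd_coe S₁ p) hzD)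
  have hp' : p' ∈ z +ᵥ (S₁ : Set V) :=
    mem_vadd_coe_comm.1 (vadd_coe_subset_vadd_coe hD'S₁ (self_mem_vadd_coe S₁ p') hz')
  have h₁ := vectorSpan_eq_of_vadd_coe_subset hA₁ hD
    (subset_inter hl (vadd_coe_subset_vadd_coe hDS₁ hp))
  have h₂ := vectorSpan_eq_of_vadd_coe_subset hA₁ hD'
    (subset_inter hl' (vadd_coe_subset_vadd_coe hD'S₁ hp'))
  exact hD'M (h₂.symm.trans (h₁.trans hDM))

theorem subset_vadd_coe_sup_span_of_parallel (hV : finrank F V = 3) {S : Submodule F V}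
    (hS : finrank F S = 2) (hnd : ¬ IsDeterminedBy U S) {D : Submodule F V} (hDS : ¬ D ≤ S)
    {p p' : V} (hl : p +ᵥ (D : Set V) ⊆ U) (hl' : p' +ᵥ (D : Set V) ⊆ U) (hpp' : p' - p ∉ D) :
    U ⊆ p +ᵥ ((D ⊔ span F {p' - p} : Submodule F V) : Set V) := by
  set T := D ⊔ span F {p' - p}
  have hDST : D ⊔ S = ⊤ := sup_eq_top_of_not_le (by omega) hDS
  intro u hu
  -- The `S`-fiber through `u` is collinear and meets both lines, at `w` and `w'`.
  obtain ⟨w, hw, hwu⟩ := exists_mem_vadd_coe_inter hDST p u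
  obtain ⟨w', hw', hw'u⟩ := exists_mem_vadd_coe_inter hDST p' u
  have hwp := mem_vadd_coe_iff.1 hw
  have hw'p' := mem_vadd_coe_iff.1 hw'
  have hsplit : w' - w = (w' - p') - (w - p) + (p' - p) := by abel
  have hww' : w' - w ≠ 0 := fun h0 => hpp' <| by
    rw [eq_sub_of_add_eq' hsplit.symm, h0, zero_sub]
    exact D.neg_mem (D.sub_mem hw'p' hwp)
  have hww'T : w' - w ∈ T :=
    hsplit ▸ T.add_mem (mem_sup_left (D.sub_mem hw'p' hwp))
      (mem_sup_right (mem_span_singleton_self _))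
  set A := U ∩ (u +ᵥ (S : Set V))
  have hwA : w ∈ A := ⟨hl hw, hwu⟩
  have hAT : vectorSpan F A ≤ T :=
    le_of_finrank_le_one_of_mem (collinear_inter_vadd_coe hS hnd u).finrank_le_one
      (vsub_mem_vectorSpan F ⟨hl' hw', hw'u⟩ hwA) hww' hww'T
  have huw : u - w ∈ T := hAT (vsub_mem_vectorSpan F ⟨hu, self_mem_vadd_coe S u⟩ hwA)
  exact mem_vadd_coe_iff.2 (by simpa using T.add_mem huw (mem_sup_left hwp))

end

theorem stmt_14_general {F : Type*} [Field F]
    (U : Set (Fin 3 → F))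
    (hplane : ¬ ∃ (x : Fin 3 → F) (P : Submodule F (Fin 3 → F)),
      Module.finrank F P = 2 ∧ U ⊆ x +ᵥ (P : Set (Fin 3 → F)))
    (S₁ S₂ : Submodule F (Fin 3 → F)) (hne : S₁ ≠ S₂)
    (hS₁ : Module.finrank F S₁ = 2) (hS₂ : Module.finrank F S₂ = 2)
    (hnd₁ : ¬ IsDeterminedBy U S₁) (hnd₂ : ¬ IsDeterminedBy U S₂)
    (M : Submodule F (Fin 3 → F)) (hM : M = S₁ ⊓ S₂)
    (h : ∃ (p₁ p₂ : Fin 3 → F) (D₁ D₂ : Submodule F (Fin 3 → F)),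
      Module.finrank F D₁ = 1 ∧ Module.finrank F D₂ = 1 ∧ D₁ ≤ S₁ ∧ D₂ ≤ S₁ ∧
      p₁ +ᵥ (D₁ : Set (Fin 3 → F)) ⊆ U ∧ p₂ +ᵥ (D₂ : Set (Fin 3 → F)) ⊆ U ∧
      D₁ ≠ D₂) :
    (∀ (p p' : Fin 3 → F) (D D' : Submodule F (Fin 3 → F)),
      Module.finrank F D = 1 → Module.finrank F D' = 1 → D ≤ S₁ → D' ≤ S₁ →
      p +ᵥ (D : Set (Fin 3 → F)) ⊆ U → p' +ᵥ (D' : Set (Fin 3 → F)) ⊆ U →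
      p +ᵥ (D : Set (Fin 3 → F)) ≠ p' +ᵥ (D' : Set (Fin 3 → F)) → D ≠ D') ∧
    (∀ (p : Fin 3 → F) (D : Submodule F (Fin 3 → F)),
      Module.finrank F D = 1 → D ≤ S₁ →
      p +ᵥ (D : Set (Fin 3 → F)) ⊆ U → D ≠ M) := by
  subst hM
  have hV : finrank F (Fin 3 → F) = 3 := finrank_fin_fun F
  obtain ⟨p₁, p₂, D₁, D₂, hD₁, hD₂, hD₁S, hD₂S, hl₁, hl₂, hD₁₂⟩ := h
  have hnoM : ∀ (p : Fin 3 → F) (D : Submodule F (Fin 3 → F)), finrank F D = 1 →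
      p +ᵥ (D : Set (Fin 3 → F)) ⊆ U → D ≠ S₁ ⊓ S₂ := by
    intro p D hD hl
    by_cases h₁ : D₁ = S₁ ⊓ S₂
    · exact ne_inf_of_vadd_coe_subset hV hne hS₁ hS₂ hnd₁ hnd₂ hD₂ hD₂S (h₁ ▸ hD₁₂.symm) hl₂ hD hl
    · exact ne_inf_of_vadd_coe_subset hV hne hS₁ hS₂ hnd₁ hnd₂ hD₁ hD₁S h₁ hl₁ hD hl
  refine ⟨fun p p' D D' hD _ hDS _ hl hl' hll' hDD' => ?_, fun p D hD _ hl => hnoM p D hD hl⟩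
  subst hDD'
  have hpp' : p' - p ∉ D := fun hmem =>
    hll' ((leftAddCoset_eq_iff D.toAddSubgroup).2 (by rwa [neg_add_eq_sub]))
  have hDS₂ := not_le_of_ne_inf hne hS₁ hS₂ hD hDS (hnoM p D hD hl)
  exact hplane ⟨p, _, by rw [finrank_sup_span_singleton hpp', hD],
    subset_vadd_coe_sup_span_of_parallel hV hS₂ hnd₂ hDS₂ hl hl' hpp'⟩

/-- Corollary 7 in the paper: assume `U` is not contained in any affine
plane. With two undetermined lines at infinity corresponding to `S₁ ≠ S₂` meeting at
`M = S₁ ∩ S₂`, if `U` contains two non-parallel affine lines with directions in `S₁`,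
then any two distinct affine lines contained in `U` with directions in `S₁` have distinct
directions, and none of these directions is `M`. -/
theorem stmt_14 {F : Type*} [Field F] [Fintype F] {q : ℕ}
    (hq : Fintype.card F = q)
    (U : Set (Fin 3 → F)) (hU : U.ncard = q ^ 2)
    (hplane : ¬ ∃ (x : Fin 3 → F) (P : Submodule F (Fin 3 → F)),
      Module.finrank F P = 2 ∧ U ⊆ x +ᵥ (P : Set (Fin 3 → F)))
    (S₁ S₂ : Submodule F (Fin 3 → F)) (hne : S₁ ≠ S₂)
    (hS₁ : Module.finrank F S₁ = 2) (hS₂ : Module.finrank F S₂ = 2)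
    (hnd₁ : ¬ IsDeterminedBy U S₁) (hnd₂ : ¬ IsDeterminedBy U S₂)
    (M : Submodule F (Fin 3 → F)) (hM : M = S₁ ⊓ S₂)
    (h : ∃ (p₁ p₂ : Fin 3 → F) (D₁ D₂ : Submodule F (Fin 3 → F)),
      Module.finrank F D₁ = 1 ∧ Module.finrank F D₂ = 1 ∧ D₁ ≤ S₁ ∧ D₂ ≤ S₁ ∧
      p₁ +ᵥ (D₁ : Set (Fin 3 → F)) ⊆ U ∧ p₂ +ᵥ (D₂ : Set (Fin 3 → F)) ⊆ U ∧
      D₁ ≠ D₂) :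
    (∀ (p p' : Fin 3 → F) (D D' : Submodule F (Fin 3 → F)),
      Module.finrank F D = 1 → Module.finrank F D' = 1 → D ≤ S₁ → D' ≤ S₁ →
      p +ᵥ (D : Set (Fin 3 → F)) ⊆ U → p' +ᵥ (D' : Set (Fin 3 → F)) ⊆ U →
      p +ᵥ (D : Set (Fin 3 → F)) ≠ p' +ᵥ (D' : Set (Fin 3 → F)) → D ≠ D') ∧
    (∀ (p : Fin 3 → F) (D : Submodule F (Fin 3 → F)),
      Module.finrank F D = 1 → D ≤ S₁ →
      p +ᵥ (D : Set (Fin 3 → F)) ⊆ U → D ≠ M) :=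
  stmt_14_general U hplane S₁ S₂ hne hS₁ hS₂ hnd₁ hnd₂ M hM h
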